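/- Let (λ, ρ, φ_λ, φ_ρ, φ_λρ) be a quasi-commuting pair of coactions of a quasi-Hopf algebra G on M and q_ρ = φ_ρ¹ ⊗ S⁻¹(αφ_ρ³)φ_ρ² ∈ M ⊗ G. Then (λ ⊗ id_G)(q_ρ)·φ_λρ⁻¹ = (1_G ⊗ 1_M ⊗ S⁻¹(φ_λρ³))·(φ_λρ¹ ⊗ q_ρ·ρ(φ_λρ²)) in G ⊗ M ⊗ G, where φ_λρ = φ_λρ¹ ⊗ φ_λρ² ⊗ φ_λρ³. -/

import Mathlib

open TensorProduct

set_option maxHeartbeats 1000000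

noncomputable section

/-- A quasi-bialgebra structure (Drinfeld) on an algebra `G` over `ℂ`: algebra maps
`Δ : G → G ⊗ G` and `ε : G → ℂ`, together with an invertible reassociator
`φ ∈ G ⊗ G ⊗ G` satisfying quasi-coassociativity, the pentagon identity and the counit
axioms. -/
structure QuasiBialg (G : Type*) [Ring G] [Algebra ℂ G] where
  comul : G →ₐ[ℂ] G ⊗[ℂ] G
  counit : G →ₐ[ℂ] ℂ
  assocEl : G ⊗[ℂ] (G ⊗[ℂ] G)
  assocElInv : G ⊗[ℂ] (G ⊗[ℂ] G)
  assocEl_mul_inv : assocEl * assocElInv = 1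
  assocEl_inv_mul : assocElInv * assocEl = 1
  quasiCoassoc : ∀ a : G,
    TensorProduct.map LinearMap.id comul.toLinearMap (comul a) * assocEl =
      assocEl *
        (TensorProduct.assoc ℂ G G G)
          (TensorProduct.map comul.toLinearMap LinearMap.id (comul a))
  counit_comul_left : ∀ a : G,
    (TensorProduct.lid ℂ G)
      (TensorProduct.map counit.toLinearMap LinearMap.id (comul a)) = a
  counit_comul_right : ∀ a : G,
    (TensorProduct.rid ℂ G)
      (TensorProduct.map LinearMap.id counit.toLinearMap (comul a)) = a
  counit_assocEl :
    TensorProduct.map LinearMap.id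
        ((TensorProduct.lid ℂ G).toLinearMap ∘ₗ
          TensorProduct.map counit.toLinearMap LinearMap.id) assocEl =
      (1 : G ⊗[ℂ] G)
  pentagon :
    TensorProduct.map LinearMap.id
          (TensorProduct.map LinearMap.id comul.toLinearMap) assocEl *
        (TensorProduct.assoc ℂ G G (G ⊗[ℂ] G))
          (TensorProduct.map comul.toLinearMap LinearMap.id assocEl) =
      ((1 : G) ⊗ₜ[ℂ] assocEl) *
        TensorProduct.map LinearMap.id (TensorProduct.assoc ℂ G G G).toLinearMap
          (TensorProduct.map LinearMap.id
            (TensorProduct.map comul.toLinearMap LinearMap.id) assocEl) *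
        TensorProduct.map LinearMap.id (TensorProduct.assoc ℂ G G G).toLinearMap
          ((TensorProduct.assoc ℂ G (G ⊗[ℂ] G) G) (assocEl ⊗ₜ[ℂ] (1 : G)))

/-- A quasi-Hopf algebra structure (Drinfeld) on an algebra `G` over `ℂ`: a quasi-bialgebra
together with an invertible algebra antimorphism `S` and elements `α, β ∈ G` satisfying the
antipode axioms. -/
structure QuasiHopf (G : Type*) [Ring G] [Algebra ℂ G] extends QuasiBialg G where
  S : G →ₗ[ℂ] G
  S_one : S 1 = 1
  S_mul : ∀ a b : G, S (a * b) = S b * S a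
  Sinv : G →ₗ[ℂ] G
  Sinv_S : ∀ a : G, Sinv (S a) = a
  S_Sinv : ∀ a : G, S (Sinv a) = a
  alphaEl : G
  betaEl : G
  antipode_left : ∀ a : G,
    LinearMap.mul' ℂ G
        (TensorProduct.map (LinearMap.mulRight ℂ alphaEl ∘ₗ S) LinearMap.id (comul a)) =
      counit a • alphaEl
  antipode_right : ∀ a : G,
    LinearMap.mul' ℂ G
        (TensorProduct.map (LinearMap.mulRight ℂ betaEl) S (comul a)) =
      counit a • betaEl
  antipode_assocEl :
    (LinearMap.mul' ℂ G ∘ₗ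
        TensorProduct.map (LinearMap.mulRight ℂ betaEl)
          (LinearMap.mul' ℂ G ∘ₗ
            TensorProduct.map (LinearMap.mulRight ℂ alphaEl ∘ₗ S) LinearMap.id))
      assocEl = 1
  antipode_assocElInv :
    (LinearMap.mul' ℂ G ∘ₗ
        TensorProduct.map (LinearMap.mulRight ℂ alphaEl ∘ₗ S)
          (LinearMap.mul' ℂ G ∘ₗ
            TensorProduct.map (LinearMap.mulRight ℂ betaEl) S))
      assocElInv = 1

/-- A left coaction `(λ, φ_λ)` of a quasi-bialgebra `Q` on an algebra `M`: an algebra map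
`λ : M → G ⊗ M` with invertible reassociator `φ_λ ∈ G ⊗ G ⊗ M` satisfying the intertwining
relation, the mixed pentagon identity and the counit axioms. -/
structure LeftQCoaction (G M : Type*) [Ring G] [Algebra ℂ G] [Ring M] [Algebra ℂ M]
    (Q : QuasiBialg G) where
  lam : M →ₐ[ℂ] G ⊗[ℂ] M
  phiL : G ⊗[ℂ] (G ⊗[ℂ] M)
  phiLInv : G ⊗[ℂ] (G ⊗[ℂ] M)
  phiL_mul_inv : phiL * phiLInv = 1
  phiL_inv_mul : phiLInv * phiL = 1
  intertwine : ∀ m : M,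
    TensorProduct.map LinearMap.id lam.toLinearMap (lam m) * phiL =
      phiL *
        (TensorProduct.assoc ℂ G G M)
          (TensorProduct.map Q.comul.toLinearMap LinearMap.id (lam m))
  pentagon :
    ((1 : G) ⊗ₜ[ℂ] phiL) *
        TensorProduct.map LinearMap.id (TensorProduct.assoc ℂ G G M).toLinearMap
          (TensorProduct.map LinearMap.id
            (TensorProduct.map Q.comul.toLinearMap LinearMap.id) phiL) *
        TensorProduct.map LinearMap.id (TensorProduct.assoc ℂ G G M).toLinearMap
          ((TensorProduct.assoc ℂ G (G ⊗[ℂ] G) M) (Q.assocEl ⊗ₜ[ℂ] (1 : M))) =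
      TensorProduct.map LinearMap.id
          (TensorProduct.map LinearMap.id lam.toLinearMap) phiL *
        (TensorProduct.assoc ℂ G G (G ⊗[ℂ] M))
          (TensorProduct.map Q.comul.toLinearMap LinearMap.id phiL)
  counit_lam : ∀ m : M,
    (TensorProduct.lid ℂ M)
      (TensorProduct.map Q.counit.toLinearMap LinearMap.id (lam m)) = m
  counit_phiL_mid :
    TensorProduct.map LinearMap.id
        ((TensorProduct.lid ℂ M).toLinearMap ∘ₗ
          TensorProduct.map Q.counit.toLinearMap LinearMap.id) phiL =
      (1 : G ⊗[ℂ] M)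
  counit_phiL_left :
    (TensorProduct.lid ℂ (G ⊗[ℂ] M))
        (TensorProduct.map Q.counit.toLinearMap LinearMap.id phiL) =
      (1 : G ⊗[ℂ] M)

/-- A right coaction `(ρ, φ_ρ)` of a quasi-bialgebra `Q` on an algebra `M`: an algebra map
`ρ : M → M ⊗ G` with invertible reassociator `φ_ρ ∈ M ⊗ G ⊗ G` satisfying the intertwining
relation, the mixed pentagon identity and the counit axioms. -/
structure RightQCoaction (G M : Type*) [Ring G] [Algebra ℂ G] [Ring M] [Algebra ℂ M]
    (Q : QuasiBialg G) where
  rho : M →ₐ[ℂ] M ⊗[ℂ] G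
  phiR : M ⊗[ℂ] (G ⊗[ℂ] G)
  phiRInv : M ⊗[ℂ] (G ⊗[ℂ] G)
  phiR_mul_inv : phiR * phiRInv = 1
  phiR_inv_mul : phiRInv * phiR = 1
  intertwine : ∀ m : M,
    phiR *
        (TensorProduct.assoc ℂ M G G)
          (TensorProduct.map rho.toLinearMap LinearMap.id (rho m)) =
      TensorProduct.map LinearMap.id Q.comul.toLinearMap (rho m) * phiR
  pentagon :
    ((1 : M) ⊗ₜ[ℂ] Q.assocEl) *
        TensorProduct.map LinearMap.id (TensorProduct.assoc ℂ G G G).toLinearMap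
          (TensorProduct.map LinearMap.id
            (TensorProduct.map Q.comul.toLinearMap LinearMap.id) phiR) *
        TensorProduct.map LinearMap.id (TensorProduct.assoc ℂ G G G).toLinearMap
          ((TensorProduct.assoc ℂ M (G ⊗[ℂ] G) G) (phiR ⊗ₜ[ℂ] (1 : G))) =
      TensorProduct.map LinearMap.id
          (TensorProduct.map LinearMap.id Q.comul.toLinearMap) phiR *
        (TensorProduct.assoc ℂ M G (G ⊗[ℂ] G))
          (TensorProduct.map rho.toLinearMap LinearMap.id phiR)
  counit_rho : ∀ m : M,
    (TensorProduct.rid ℂ M)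
      (TensorProduct.map LinearMap.id Q.counit.toLinearMap (rho m)) = m
  counit_phiR_mid :
    TensorProduct.map LinearMap.id
        ((TensorProduct.lid ℂ G).toLinearMap ∘ₗ
          TensorProduct.map Q.counit.toLinearMap LinearMap.id) phiR =
      (1 : M ⊗[ℂ] G)
  counit_phiR_right :
    TensorProduct.map LinearMap.id
        ((TensorProduct.rid ℂ G).toLinearMap ∘ₗ
          TensorProduct.map LinearMap.id Q.counit.toLinearMap) phiR =
      (1 : M ⊗[ℂ] G)

variable {G M : Type*} [Ring G] [Algebra ℂ G] [Ring M] [Algebra ℂ M]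

/-- The element `q_ρ = φ_ρ¹ ⊗ S⁻¹(α φ_ρ³) φ_ρ² ∈ M ⊗ G`. -/
def qRho (Q : QuasiHopf G) (R : RightQCoaction G M Q.toQuasiBialg) : M ⊗[ℂ] G :=
  TensorProduct.map LinearMap.id
    (LinearMap.mul' ℂ G ∘ₗ
      TensorProduct.map (Q.Sinv ∘ₗ LinearMap.mulLeft ℂ Q.alphaEl) LinearMap.id ∘ₗ
      (TensorProduct.comm ℂ G G).toLinearMap)
    R.phiR

/-- For `n ⊗ y ∈ M ⊗ G`, the element `(1_M ⊗ S⁻¹(y))·t·ρ(n) ∈ M ⊗ G` (extended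
bilinearly). -/
def thetaRQ (Q : QuasiHopf G) (R : RightQCoaction G M Q.toQuasiBialg) (t : M ⊗[ℂ] G) :
    M ⊗[ℂ] G →ₗ[ℂ] M ⊗[ℂ] G :=
  TensorProduct.lift (LinearMap.mul ℂ (M ⊗[ℂ] G) ∘ₗ LinearMap.mulRight ℂ t) ∘ₗ
    TensorProduct.map (TensorProduct.mk ℂ M G (1 : M) ∘ₗ Q.Sinv) R.rho.toLinearMap ∘ₗ
    (TensorProduct.comm ℂ M G).toLinearMap

/-!
Contract the last two factors of the second mixed pentagon identity, an equation in
`G ⊗ M ⊗ G ⊗ G`, with `x ⊗ z ↦ S⁻¹(α z) x`. By the antipode axiom `S(b₁) α b₂ = ε(b) α` this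
sends `Δ(b)` to `ε(b) S⁻¹(α)`, so the right-hand side becomes
`(id ⊗ id ⊗ ε)(φ_λρ) · (λ ⊗ id)(q_ρ)`, while the left-hand side becomes
`(1 ⊗ 1 ⊗ S⁻¹(φ_λρ³))(φ_λρ¹ ⊗ q_ρ ρ(φ_λρ²)) · φ_λρ`. Applying `ε` to the third factor of the
same identity instead gives `φ_λρ · (id ⊗ id ⊗ ε)(φ_λρ) = φ_λρ`, so `(id ⊗ id ⊗ ε)(φ_λρ) = 1`;
multiplying by `φ_λρ⁻¹` on the right gives the claim.
-/

theorem TensorProduct.induction_on₃ {R A B C : Type*} [CommSemiring R] [AddCommMonoid A]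
    [AddCommMonoid B] [AddCommMonoid C] [Module R A] [Module R B] [Module R C]
    {motive : A ⊗[R] (B ⊗[R] C) → Prop} (t : A ⊗[R] (B ⊗[R] C)) (zero : motive 0)
    (tmul : ∀ a b c, motive (a ⊗ₜ (b ⊗ₜ c)))
    (add : ∀ x y, motive x → motive y → motive (x + y)) : motive t := by
  induction t using TensorProduct.induction_on with
  | zero => exact zero
  | tmul a u =>
    induction u using TensorProduct.induction_on with
    | zero => simpa using zero
    | tmul b c => exact tmul a b c
    | add u v hu hv => simpa [tmul_add] using add _ _ hu hv
  | add x y hx hy => exact add x y hx hy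

theorem TensorProduct.map_id_map_assoc_map_id {R A B C D E : Type*} [CommSemiring R]
    [AddCommMonoid A] [AddCommMonoid B] [AddCommMonoid C] [AddCommMonoid D] [AddCommMonoid E]
    [Module R A] [Module R B] [Module R C] [Module R D] [Module R E]
    (l : A →ₗ[R] B ⊗[R] C) (g : D →ₗ[R] E) (s : A ⊗[R] D) :
    map LinearMap.id (map LinearMap.id g) (TensorProduct.assoc R B C D (map l LinearMap.id s)) =
      TensorProduct.assoc R B C E (map l LinearMap.id (map LinearMap.id g s)) := by
  simp [map_map_assoc, map_map]

namespace TensorProduct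

variable {R A B C : Type*} [CommSemiring R] [Semiring A] [Algebra R A] [Semiring B]
  [Algebra R B] [Semiring C] [Algebra R C] {f : B →ₗ[R] C}

theorem map_id_tmul_mul {b : B} {c : C} (h : ∀ w, f (b * w) = c * f w) (a : A)
    (t : A ⊗[R] B) :
    map LinearMap.id f ((a ⊗ₜ b) * t) = (a ⊗ₜ c) * map LinearMap.id f t := by
  induction t using TensorProduct.induction_on with
  | zero => simp
  | tmul a' w => simp [Algebra.TensorProduct.tmul_mul_tmul, h]
  | add x y hx hy => simp [mul_add, hx, hy]

theorem map_id_mul_tmul {b : B} {l r : C} (h : ∀ w, f (w * b) = l * f w * r) (a : A)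
    (t : A ⊗[R] B) :
    map LinearMap.id f (t * (a ⊗ₜ b)) =
      ((1 : A) ⊗ₜ l) * map LinearMap.id f t * (a ⊗ₜ r) := by
  induction t using TensorProduct.induction_on with
  | zero => simp
  | tmul a' w => simp [Algebra.TensorProduct.tmul_mul_tmul, h]
  | add x y hx hy => simp [add_mul, mul_add, hx, hy]

end TensorProduct

namespace QuasiHopf

variable (Q : QuasiHopf G)

theorem Sinv_one : Q.Sinv 1 = 1 := by
  simpa [Q.S_one] using Q.Sinv_S 1

theorem Sinv_mul (x y : G) : Q.Sinv (x * y) = Q.Sinv y * Q.Sinv x := by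
  conv_rhs => rw [← Q.Sinv_S (Q.Sinv y * Q.Sinv x), Q.S_mul, Q.S_Sinv, Q.S_Sinv]

/-- `qRho Q R` is `(id ⊗ qMap) φ_ρ` by definition. -/
def qMap : G ⊗[ℂ] G →ₗ[ℂ] G :=
  LinearMap.mul' ℂ G ∘ₗ map (Q.Sinv ∘ₗ LinearMap.mulLeft ℂ Q.alphaEl) LinearMap.id ∘ₗ
    (TensorProduct.comm ℂ G G).toLinearMap

theorem qMap_tmul (x z : G) : Q.qMap (x ⊗ₜ z) = Q.Sinv (Q.alphaEl * z) * x := by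
  simp [qMap]

theorem qMap_mul_tmul (x z : G) (w : G ⊗[ℂ] G) :
    Q.qMap (w * (x ⊗ₜ z)) = Q.Sinv z * Q.qMap w * x := by
  induction w using TensorProduct.induction_on with
  | zero => simp
  | tmul a c => simp [Algebra.TensorProduct.tmul_mul_tmul, qMap_tmul, ← mul_assoc, Sinv_mul]
  | add u v hu hv => simp [add_mul, mul_add, hu, hv]

theorem qMap_eq_Sinv_comp :
    Q.qMap = Q.Sinv ∘ₗ LinearMap.mul' ℂ G ∘ₗ
      map (LinearMap.mulRight ℂ Q.alphaEl ∘ₗ Q.S) LinearMap.id :=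
  TensorProduct.ext' fun x z => by simp [qMap_tmul, Sinv_mul, mul_assoc, Q.Sinv_S]

theorem qMap_comul (b : G) : Q.qMap (Q.comul b) = Q.counit b • Q.Sinv Q.alphaEl := by
  rw [qMap_eq_Sinv_comp, LinearMap.comp_apply, LinearMap.comp_apply, Q.antipode_left, map_smul]

theorem qMap_comul_mul (b : G) (u : G ⊗[ℂ] G) :
    Q.qMap (Q.comul b * u) = algebraMap ℂ G (Q.counit b) * Q.qMap u := by
  induction u using TensorProduct.induction_on with
  | zero => simp
  | tmul x z =>
    rw [qMap_mul_tmul, qMap_comul, qMap_tmul, Sinv_mul, Algebra.smul_def]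
    simp only [mul_assoc, Algebra.commutes]
  | add u v hu hv => simp [mul_add, hu, hv]

end QuasiHopf

section Counits

variable (Q : QuasiBialg G)

def counitThird : G ⊗[ℂ] (M ⊗[ℂ] (G ⊗[ℂ] G)) →ₐ[ℂ] G ⊗[ℂ] (M ⊗[ℂ] G) :=
  Algebra.TensorProduct.map (AlgHom.id ℂ G) <| Algebra.TensorProduct.map (AlgHom.id ℂ M) <|
    (Algebra.TensorProduct.lid ℂ G).toAlgHom.comp
      (Algebra.TensorProduct.map Q.counit (AlgHom.id ℂ G))

def counitLast : G ⊗[ℂ] (M ⊗[ℂ] G) →ₗ[ℂ] G ⊗[ℂ] (M ⊗[ℂ] G) :=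
  map LinearMap.id (map LinearMap.id (Algebra.linearMap ℂ G ∘ₗ Q.counit.toLinearMap))

theorem counitThird_apply (t : G ⊗[ℂ] (M ⊗[ℂ] (G ⊗[ℂ] G))) :
    counitThird Q t = map LinearMap.id (map LinearMap.id
      ((TensorProduct.lid ℂ G).toLinearMap ∘ₗ map Q.counit.toLinearMap LinearMap.id)) t := by
  induction t using TensorProduct.induction_on₃ with
  | zero => simp
  | tmul a m u =>
    induction u using TensorProduct.induction_on with
    | zero => simp
    | tmul x z => simp [counitThird]
    | add u v hu hv => simp_all [tmul_add]
  | add x y hx hy => simp [hx, hy]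

theorem map_counit_assoc_tmul (v : M ⊗[ℂ] G) (y : G) :
    map LinearMap.id ((TensorProduct.lid ℂ G).toLinearMap ∘ₗ
        map Q.counit.toLinearMap LinearMap.id) (TensorProduct.assoc ℂ M G G (v ⊗ₜ y)) =
      TensorProduct.rid ℂ M (map LinearMap.id Q.counit.toLinearMap v) ⊗ₜ y := by
  induction v using TensorProduct.induction_on with
  | zero => simp
  | tmul n x => simp [smul_tmul]
  | add v w hv hw => simp [add_tmul, hv, hw]

theorem counitThird_one_tmul_phiR (R : RightQCoaction G M Q) :
    counitThird Q ((1 : G) ⊗ₜ R.phiR) = 1 := by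
  rw [counitThird_apply, map_tmul, R.counit_phiR_mid]
  rfl

theorem counitThird_map_rho (R : RightQCoaction G M Q) (T : G ⊗[ℂ] (M ⊗[ℂ] G)) :
    counitThird Q (map LinearMap.id
      ((TensorProduct.assoc ℂ M G G).toLinearMap ∘ₗ map R.rho.toLinearMap LinearMap.id) T) = T := by
  induction T using TensorProduct.induction_on₃ with
  | zero => simp
  | tmul c n y =>
    simp [counitThird_apply, map_counit_assoc_tmul, R.counit_rho]
  | add x y hx hy => simp [hx, hy]

theorem counitThird_assoc_tmul_one (T : G ⊗[ℂ] (M ⊗[ℂ] G)) :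
    counitThird Q (map LinearMap.id (TensorProduct.assoc ℂ M G G).toLinearMap
      (TensorProduct.assoc ℂ G (M ⊗[ℂ] G) G (T ⊗ₜ (1 : G)))) = counitLast Q T := by
  induction T using TensorProduct.induction_on₃ with
  | zero => simp
  | tmul c n x =>
    simp [counitThird_apply, counitLast, Algebra.algebraMap_eq_smul_one, tmul_smul]
  | add x y hx hy => simp [add_tmul, hx, hy]

theorem counitThird_map_comul (T : G ⊗[ℂ] (M ⊗[ℂ] G)) :
    counitThird Q (map LinearMap.id (map LinearMap.id Q.comul.toLinearMap) T) = T := by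
  induction T using TensorProduct.induction_on₃ with
  | zero => simp
  | tmul c n y => simp [counitThird_apply, Q.counit_comul_left]
  | add x y hx hy => simp [hx, hy]

theorem counitThird_assoc_map_lam_phiR (L : LeftQCoaction G M Q) (R : RightQCoaction G M Q) :
    counitThird Q (TensorProduct.assoc ℂ G M (G ⊗[ℂ] G)
      (map L.lam.toLinearMap LinearMap.id R.phiR)) = 1 := by
  rw [counitThird_apply, map_id_map_assoc_map_id, R.counit_phiR_mid]
  simp [Algebra.TensorProduct.one_def]

end Counits

section QContract

variable (Q : QuasiHopf G)

def qContract : G ⊗[ℂ] (M ⊗[ℂ] (G ⊗[ℂ] G)) →ₗ[ℂ] G ⊗[ℂ] (M ⊗[ℂ] G) :=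
  map LinearMap.id (map LinearMap.id Q.qMap)

theorem qContract_mul_tmul (u : G ⊗[ℂ] (M ⊗[ℂ] (G ⊗[ℂ] G))) (c : G) (n : M) (x y : G) :
    qContract Q (u * (c ⊗ₜ (n ⊗ₜ (x ⊗ₜ y)))) =
      ((1 : G) ⊗ₜ ((1 : M) ⊗ₜ Q.Sinv y)) * qContract Q u * (c ⊗ₜ (n ⊗ₜ x)) :=
  map_id_mul_tmul (map_id_mul_tmul (Q.qMap_mul_tmul x y) n) c u

theorem qContract_tmul_comul_mul (c : G) (m : M) (b : G)
    (p : G ⊗[ℂ] (M ⊗[ℂ] (G ⊗[ℂ] G))) :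
    qContract Q ((c ⊗ₜ (m ⊗ₜ Q.comul b)) * p) =
      (c ⊗ₜ (m ⊗ₜ algebraMap ℂ G (Q.counit b))) * qContract Q p :=
  map_id_tmul_mul (map_id_tmul_mul (Q.qMap_comul_mul b) m) c p

-- `mul_add` and `mul_zero` do not find their instances on this fourfold tensor product, so
-- `Distrib.left_distrib` and `MulZeroClass.mul_zero` are used with explicit arguments.
theorem qContract_mul_assoc_tmul_one (u : G ⊗[ℂ] (M ⊗[ℂ] (G ⊗[ℂ] G)))
    (T : G ⊗[ℂ] (M ⊗[ℂ] G)) :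
    qContract Q (u * map LinearMap.id (TensorProduct.assoc ℂ M G G).toLinearMap
      (TensorProduct.assoc ℂ G (M ⊗[ℂ] G) G (T ⊗ₜ (1 : G)))) = qContract Q u * T := by
  induction T using TensorProduct.induction_on₃ with
  | zero => simp [MulZeroClass.mul_zero u]
  | tmul c n x => simp [qContract_mul_tmul, Q.Sinv_one, ← Algebra.TensorProduct.one_def]
  | add x y hx hy =>
    simp only [add_tmul, map_add]
    rw [Distrib.left_distrib u, map_add, hx, hy, Distrib.left_distrib]

theorem qContract_map_comul_mul (T : G ⊗[ℂ] (M ⊗[ℂ] G))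
    (p : G ⊗[ℂ] (M ⊗[ℂ] (G ⊗[ℂ] G))) :
    qContract Q (map LinearMap.id (map LinearMap.id Q.comul.toLinearMap) T * p) =
      counitLast Q.toQuasiBialg T * qContract Q p := by
  induction T using TensorProduct.induction_on₃ with
  | zero => simp [MulZeroClass.zero_mul p]
  | tmul c n y => simp [qContract_tmul_comul_mul, counitLast]
  | add x y hx hy =>
    rw [map_add, Distrib.right_distrib, map_add, hx, hy, map_add, add_mul]

variable (R : RightQCoaction G M Q.toQuasiBialg)

theorem thetaRQ_tmul (t : M ⊗[ℂ] G) (n : M) (y : G) :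
    thetaRQ Q R t (n ⊗ₜ y) = ((1 : M) ⊗ₜ Q.Sinv y) * t * R.rho n := by
  simp [thetaRQ]

theorem map_qMap_phiR_mul_assoc_tmul (v : M ⊗[ℂ] G) (y : G) :
    map LinearMap.id Q.qMap (R.phiR * TensorProduct.assoc ℂ M G G (v ⊗ₜ y)) =
      ((1 : M) ⊗ₜ Q.Sinv y) * qRho Q R * v := by
  induction v using TensorProduct.induction_on with
  | zero => simp
  | tmul n x => exact map_id_mul_tmul (Q.qMap_mul_tmul x y) n R.phiR
  | add v w hv hw => simp [add_tmul, mul_add, hv, hw]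

theorem qContract_one_tmul_phiR_mul (T : G ⊗[ℂ] (M ⊗[ℂ] G)) :
    qContract Q (((1 : G) ⊗ₜ R.phiR) * map LinearMap.id
      ((TensorProduct.assoc ℂ M G G).toLinearMap ∘ₗ map R.rho.toLinearMap LinearMap.id) T) =
      map LinearMap.id (thetaRQ Q R (qRho Q R)) T := by
  induction T using TensorProduct.induction_on₃ with
  | zero => simp [MulZeroClass.mul_zero ((1 : G) ⊗ₜ[ℂ] R.phiR)]
  | tmul c n y =>
    simp [qContract, Algebra.TensorProduct.tmul_mul_tmul, map_qMap_phiR_mul_assoc_tmul,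
      thetaRQ_tmul]
  | add x y hx hy =>
    rw [map_add, Distrib.left_distrib ((1 : G) ⊗ₜ[ℂ] R.phiR), map_add, hx, hy, map_add]

theorem qContract_assoc_map_lam_phiR (L : LeftQCoaction G M Q.toQuasiBialg) :
    qContract Q (TensorProduct.assoc ℂ G M (G ⊗[ℂ] G)
      (map L.lam.toLinearMap LinearMap.id R.phiR)) =
      TensorProduct.assoc ℂ G M G (map L.lam.toLinearMap LinearMap.id (qRho Q R)) :=
  map_id_map_assoc_map_id _ _ _

end QContract

/-- `(1 ⊗ φ_ρ)(id ⊗ ρ ⊗ id)(Φ)(Φ ⊗ 1) = (id ⊗ id ⊗ Δ)(Φ)(λ ⊗ id ⊗ id)(φ_ρ)` -/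
def MixedPentagonRight (Q : QuasiBialg G) (L : LeftQCoaction G M Q) (R : RightQCoaction G M Q)
    (Φ : G ⊗[ℂ] (M ⊗[ℂ] G)) : Prop :=
  ((1 : G) ⊗ₜ[ℂ] R.phiR) *
      map LinearMap.id
        ((TensorProduct.assoc ℂ M G G).toLinearMap ∘ₗ map R.rho.toLinearMap LinearMap.id) Φ *
      map LinearMap.id (TensorProduct.assoc ℂ M G G).toLinearMap
        (TensorProduct.assoc ℂ G (M ⊗[ℂ] G) G (Φ ⊗ₜ[ℂ] (1 : G))) =
    map LinearMap.id (map LinearMap.id Q.comul.toLinearMap) Φ *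
      TensorProduct.assoc ℂ G M (G ⊗[ℂ] G) (map L.lam.toLinearMap LinearMap.id R.phiR)

namespace MixedPentagonRight

theorem counitLast_eq_one {Q : QuasiBialg G} {L : LeftQCoaction G M Q}
    {R : RightQCoaction G M Q} {Φ Ψ : G ⊗[ℂ] (M ⊗[ℂ] G)} (h : MixedPentagonRight Q L R Φ)
    (hΨ : Ψ * Φ = 1) : counitLast Q Φ = 1 := by
  have hε := congrArg (counitThird Q) h
  simp only [map_mul, counitThird_one_tmul_phiR, counitThird_map_rho,
    counitThird_assoc_tmul_one, counitThird_map_comul, counitThird_assoc_map_lam_phiR, one_mul,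
    mul_one] at hε
  calc counitLast Q Φ = Ψ * (Φ * counitLast Q Φ) := by rw [← mul_assoc, hΨ, one_mul]
    _ = 1 := by rw [hε, hΨ]

theorem thetaRQ_mul_eq {Q : QuasiHopf G} {L : LeftQCoaction G M Q.toQuasiBialg}
    {R : RightQCoaction G M Q.toQuasiBialg} {Φ : G ⊗[ℂ] (M ⊗[ℂ] G)}
    (h : MixedPentagonRight Q.toQuasiBialg L R Φ) :
    map LinearMap.id (thetaRQ Q R (qRho Q R)) Φ * Φ =
      counitLast Q.toQuasiBialg Φ *
        TensorProduct.assoc ℂ G M G (map L.lam.toLinearMap LinearMap.id (qRho Q R)) := by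
  have hq := congrArg (qContract Q) h
  rwa [qContract_mul_assoc_tmul_one, qContract_one_tmul_phiR_mul, qContract_map_comul_mul,
    qContract_assoc_map_lam_phiR] at hq

end MixedPentagonRight

theorem statement18_general
    (Q : QuasiHopf G)
    (L : LeftQCoaction G M Q.toQuasiBialg) (R : RightQCoaction G M Q.toQuasiBialg)
    (phiLR phiLRInv : G ⊗[ℂ] (M ⊗[ℂ] G))
    (hLR_mul_inv : phiLR * phiLRInv = 1)
    (hLR_inv_mul : phiLRInv * phiLR = 1)
    -- mixed pentagon `(1 ⊗ φ_ρ)(id ⊗ ρ ⊗ id)(φ_λρ)(φ_λρ ⊗ 1) =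
    --                 (id ⊗ id ⊗ Δ)(φ_λρ)(λ ⊗ id ⊗ id)(φ_ρ)`
    (hLR_pentagon2 :
      ((1 : G) ⊗ₜ[ℂ] R.phiR) *
          TensorProduct.map LinearMap.id
            ((TensorProduct.assoc ℂ M G G).toLinearMap ∘ₗ
              TensorProduct.map R.rho.toLinearMap LinearMap.id) phiLR *
          TensorProduct.map LinearMap.id (TensorProduct.assoc ℂ M G G).toLinearMap
            ((TensorProduct.assoc ℂ G (M ⊗[ℂ] G) G) (phiLR ⊗ₜ[ℂ] (1 : G))) =
        TensorProduct.map LinearMap.id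
            (TensorProduct.map LinearMap.id Q.comul.toLinearMap) phiLR *
          (TensorProduct.assoc ℂ G M (G ⊗[ℂ] G))
            (TensorProduct.map L.lam.toLinearMap LinearMap.id R.phiR)) :
    (TensorProduct.assoc ℂ G M G)
        (TensorProduct.map L.lam.toLinearMap LinearMap.id (qRho Q R)) * phiLRInv =
      TensorProduct.map LinearMap.id (thetaRQ Q R (qRho Q R)) phiLR := by
  have hpent : MixedPentagonRight Q.toQuasiBialg L R phiLR := hLR_pentagon2
  have hθ := hpent.thetaRQ_mul_eq
  rw [hpent.counitLast_eq_one hLR_inv_mul, one_mul] at hθ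
  rw [← hθ, mul_assoc, hLR_mul_inv, mul_one]

/-- Let `(λ, ρ, φ_λ, φ_ρ, φ_λρ)` be a quasi-commuting pair of coactions of
a quasi-Hopf algebra `G` on `M`, and `q_ρ = φ_ρ¹ ⊗ S⁻¹(α φ_ρ³) φ_ρ²`.  Then
`(λ ⊗ id)(q_ρ)·φ_λρ⁻¹ = (1 ⊗ 1 ⊗ S⁻¹(φ_λρ³))·(φ_λρ¹ ⊗ q_ρ·ρ(φ_λρ²))` in `G ⊗ M ⊗ G`. -/
theorem statement18
    (Q : QuasiHopf G)
    (L : LeftQCoaction G M Q.toQuasiBialg) (R : RightQCoaction G M Q.toQuasiBialg)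
    (phiLR phiLRInv : G ⊗[ℂ] (M ⊗[ℂ] G))
    (hLR_mul_inv : phiLR * phiLRInv = 1)
    (hLR_inv_mul : phiLRInv * phiLR = 1)
    -- `φ_λρ · (λ ⊗ id)(ρ(m)) = (id ⊗ ρ)(λ(m)) · φ_λρ`
    (hLR_intertwine : ∀ m : M,
      phiLR *
          (TensorProduct.assoc ℂ G M G)
            (TensorProduct.map L.lam.toLinearMap LinearMap.id (R.rho m)) =
        TensorProduct.map LinearMap.id R.rho.toLinearMap (L.lam m) * phiLR)
    -- mixed pentagon `(1 ⊗ φ_λρ)(id ⊗ λ ⊗ id)(φ_λρ)(φ_λ ⊗ 1) =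
    --                 (id ⊗ id ⊗ ρ)(φ_λ)(Δ ⊗ id ⊗ id)(φ_λρ)`
    (hLR_pentagon1 :
      ((1 : G) ⊗ₜ[ℂ] phiLR) *
          TensorProduct.map LinearMap.id
            ((TensorProduct.assoc ℂ G M G).toLinearMap ∘ₗ
              TensorProduct.map L.lam.toLinearMap LinearMap.id) phiLR *
          TensorProduct.map LinearMap.id (TensorProduct.assoc ℂ G M G).toLinearMap
            ((TensorProduct.assoc ℂ G (G ⊗[ℂ] M) G) (L.phiL ⊗ₜ[ℂ] (1 : G))) =
        TensorProduct.map LinearMap.id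
            (TensorProduct.map LinearMap.id R.rho.toLinearMap) L.phiL *
          (TensorProduct.assoc ℂ G G (M ⊗[ℂ] G))
            (TensorProduct.map Q.comul.toLinearMap LinearMap.id phiLR))
    -- mixed pentagon `(1 ⊗ φ_ρ)(id ⊗ ρ ⊗ id)(φ_λρ)(φ_λρ ⊗ 1) =
    --                 (id ⊗ id ⊗ Δ)(φ_λρ)(λ ⊗ id ⊗ id)(φ_ρ)`
    (hLR_pentagon2 :
      ((1 : G) ⊗ₜ[ℂ] R.phiR) *
          TensorProduct.map LinearMap.id
            ((TensorProduct.assoc ℂ M G G).toLinearMap ∘ₗ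
              TensorProduct.map R.rho.toLinearMap LinearMap.id) phiLR *
          TensorProduct.map LinearMap.id (TensorProduct.assoc ℂ M G G).toLinearMap
            ((TensorProduct.assoc ℂ G (M ⊗[ℂ] G) G) (phiLR ⊗ₜ[ℂ] (1 : G))) =
        TensorProduct.map LinearMap.id
            (TensorProduct.map LinearMap.id Q.comul.toLinearMap) phiLR *
          (TensorProduct.assoc ℂ G M (G ⊗[ℂ] G))
            (TensorProduct.map L.lam.toLinearMap LinearMap.id R.phiR)) :
    (TensorProduct.assoc ℂ G M G)
        (TensorProduct.map L.lam.toLinearMap LinearMap.id (qRho Q R)) * phiLRInv =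
      TensorProduct.map LinearMap.id (thetaRQ Q R (qRho Q R)) phiLR :=
  statement18_general Q L R phiLR phiLRInv hLR_mul_inv hLR_inv_mul hLR_pentagon2
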